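/- arXiv:2312.03170 — 5 statements merged into one kernel-verified Lean document; each statement's English description precedes it below -/
import Mathlib

section
/- Let A be a finite-dimensional mixing algebra over a field F, S ⊆ A, and m ≥ 1. Then Lin_{m+1}(S) = Lin_m(S)·S + S·Lin_m(S) + Lin_m(S), where X·Y denotes the linear span of all products x y with x ∈ X, y ∈ Y. -/
open Pointwise

namespace DescLength

variable (F : Type*) [Field F] {A : Type*} [NonUnitalNonAssocRing A] [Module F A]

/-- `Word S n a` means that `a` is a word of length `n` in letters from `S`,
i.e. a product of `n` elements of `S` with some arrangement of brackets. -/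
inductive Word (S : Set A) : ℕ → A → Prop
  | of {a : A} : a ∈ S → Word S 1 a
  | mul {m n : ℕ} {a b : A} : Word S m a → Word S n b → Word S (m + n) (a * b)

/-- The set of words of length exactly `n` in letters from `S`. -/
def words (S : Set A) (n : ℕ) : Set A := {a | Word S n a}

/-- `Lin_k(S)`, where the submodule `o` plays the role of `Lin_0(S)`:
`o = ⊥` if `A` is non-unital and `o = span F {e}` if `A` is unital with unity `e`. -/
def lin (o : Submodule F A) (S : Set A) (k : ℕ) : Submodule F A :=
  o ⊔ Submodule.span F (⋃ i ∈ Finset.Icc 1 k, words S i)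

/-- `Lin_∞(S)`. -/
def linInfty (o : Submodule F A) (S : Set A) : Submodule F A := ⨆ k, lin F o S k

/-- `S` is a generating set for `A`. -/
def Generates (o : Submodule F A) (S : Set A) : Prop := linInfty F o S = ⊤

/-- The length of the set `S`: `l(S) = min {k | Lin_k(S) = Lin_∞(S)}`. -/
noncomputable def len (o : Submodule F A) (S : Set A) : ℕ := sInf {k | lin F o S k = linInfty F o S}

/-- The length of the algebra `A`: `l(A) = max {l(S) | S generates A}`. -/
noncomputable def algLen (o : Submodule F A) : ℕ := sSup {n | ∃ S : Set A, Generates F o S ∧ len F o S = n}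

/-- The sequence of differences `d_k(S)`. -/
noncomputable def dseq (o : Submodule F A) (S : Set A) : ℕ → ℕ
  | 0 => Module.finrank F o
  | k + 1 => Module.finrank F (lin F o S (k + 1)) - Module.finrank F (lin F o S k)

/-- `o` is the span of the words of length zero: `⊥` if `A` has no two-sided unity,
and the span of the unity `e` otherwise. -/
def IsUnitalSpan (o : Submodule F A) : Prop :=
  ((¬ ∃ e : A, ∀ x : A, e * x = x ∧ x * e = x) ∧ o = ⊥) ∨
  (∃ e : A, (∀ x : A, e * x = x ∧ x * e = x) ∧ o = Submodule.span F {e})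

def Ql (x y z : A) : Set A :=
  {x*(z*y), x*(y*z), y*(x*z), y*(z*x), x*y, y*x, x*z, z*x, y*z, z*y, x, y, z}

def Qr (x y z : A) : Set A :=
  {(x*z)*y, (z*x)*y, (y*z)*x, (z*y)*x, x*y, y*x, x*z, z*x, y*z, z*y, x, y, z}

def Pset (x y z : A) : Set A := Ql x y z ∪ Qr x y z

/-- `A` is mixing: `(xy)z, z(xy) ∈ Lin_1(P(x,y,z))` for all `x, y, z`. -/
def IsMixing (o : Submodule F A) : Prop :=
  ∀ x y z : A, (x*y)*z ∈ o ⊔ Submodule.span F (Pset x y z) ∧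
    z*(x*y) ∈ o ⊔ Submodule.span F (Pset x y z)

/-- `A` is left sliding: `(xy)z ∈ Lin_1(Q_l(x,y,z))` for all `x, y, z`. -/
def IsLeftSliding (o : Submodule F A) : Prop :=
  ∀ x y z : A, (x*y)*z ∈ o ⊔ Submodule.span F (Ql x y z)

/-- `A` is right sliding: `z(xy) ∈ Lin_1(Q_r(x,y,z))` for all `x, y, z`. -/
def IsRightSliding (o : Submodule F A) : Prop :=
  ∀ x y z : A, z*(x*y) ∈ o ⊔ Submodule.span F (Qr x y z)

/-- `Lin_1(a, b, aa, ab, ba)`. -/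
def lin1five (o : Submodule F A) (a b : A) : Submodule F A :=
  o ⊔ Submodule.span F {a, b, a*a, a*b, b*a}

/-- `Lin'_2(a, b, c)`. -/
def lin2' (o : Submodule F A) (a b c : A) : Submodule F A :=
  o ⊔ Submodule.span F {a, b, c, a*b, b*a, b*c, c*b, a*c, c*a}

/-- `A` is descendingly flexible. -/
def IsDescFlexible (o : Submodule F A) : Prop :=
  ∀ a b c : A, (a*b)*a ∈ lin1five F o a b ∧ a*(b*a) ∈ lin1five F o a b ∧
    (a*b)*c + (c*b)*a ∈ lin2' F o a b c ∧ a*(b*c) + c*(b*a) ∈ lin2' F o a b c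

/-- `A` is descendingly alternative. -/
def IsDescAlternative (o : Submodule F A) : Prop :=
  ∀ a b c : A, (b*a)*a ∈ lin1five F o a b ∧ a*(a*b) ∈ lin1five F o a b ∧
    (a*b)*c + (a*c)*b ∈ lin2' F o a b c ∧ a*(b*c) + b*(a*c) ∈ lin2' F o a b c

/-- `S^{(m)}`: the words obtained from a letter of `S` by repeatedly multiplying by a single
letter of `S`, on the left or on the right. -/
def chainWords (S : Set A) : ℕ → Set A
  | 0 => ∅
  | 1 => S
  | n + 2 => chainWords S (n + 1) * S ∪ S * chainWords S (n + 1)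


section Aux

variable {F : Type*} [Field F] {A : Type*} [NonUnitalNonAssocRing A] [Module F A]
  [SMulCommClass F A A] [IsScalarTower F A A]

lemma Word.one_le' {S : Set A} {n : ℕ} {a : A} (h : Word S n a) : 1 ≤ n := by
  induction h with
  | of _ => exact le_refl 1
  | mul _ _ ih1 ih2 => omega

lemma Word.mem_of_one' {S : Set A} {n : ℕ} {a : A} (h : Word S n a) (hn : n = 1) :
    a ∈ S := by
  cases h with
  | of h => exact h
  | mul h1 h2 =>
    exfalso
    have := h1.one_le'; have := h2.one_le'; omega

lemma Word.mem_of_one {S : Set A} {a : A} (h : Word S 1 a) : a ∈ S := h.mem_of_one' rfl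

lemma Word.exists_mul {S : Set A} {n : ℕ} {a : A} (h : Word S n a) (hn : 2 ≤ n) :
    ∃ i j u v, Word S i u ∧ Word S j v ∧ i + j = n ∧ a = u * v := by
  cases h with
  | of _ => exact absurd hn (by omega)
  | mul h1 h2 => exact ⟨_, _, _, _, h1, h2, rfl, rfl⟩

lemma mem_lin_of_word {o : Submodule F A} {S : Set A} {k n : ℕ} {a : A}
    (h : Word S n a) (hn : n ≤ k) : a ∈ lin F o S k :=
  Submodule.mem_sup_right (Submodule.subset_span
    (Set.mem_biUnion (Finset.mem_Icc.mpr ⟨h.one_le', hn⟩) h))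

/-- The right-hand side of Statement 2. -/
private def rhs (o : Submodule F A) (S : Set A) (m : ℕ) : Submodule F A :=
  Submodule.span F ((lin F o S m : Set A) * S) ⊔
    Submodule.span F (S * (lin F o S m : Set A)) ⊔ lin F o S m

private lemma lin_le_rhs {o : Submodule F A} {S : Set A} {m : ℕ} :
    lin F o S m ≤ rhs o S m := le_sup_right

private lemma word_mem_rhs {o : Submodule F A} {S : Set A} {m n : ℕ} {a : A}
    (h : Word S n a) (hn : n ≤ m) : a ∈ rhs o S m :=
  lin_le_rhs (mem_lin_of_word h hn)

private lemma mulS_mem_rhs {o : Submodule F A} {S : Set A} {m : ℕ} {a s : A}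
    (ha : a ∈ lin F o S m) (hs : s ∈ S) : a * s ∈ rhs o S m :=
  Submodule.mem_sup_left (Submodule.mem_sup_left
    (Submodule.subset_span (Set.mul_mem_mul ha hs)))

private lemma sMul_mem_rhs {o : Submodule F A} {S : Set A} {m : ℕ} {a s : A}
    (ha : a ∈ lin F o S m) (hs : s ∈ S) : s * a ∈ rhs o S m :=
  Submodule.mem_sup_left (Submodule.mem_sup_right
    (Submodule.subset_span (Set.mul_mem_mul hs ha)))

private lemma key_mixing {o : Submodule F A} (hmix : IsMixing F o) {S : Set A} {m : ℕ}
    (hm : 1 ≤ m) :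
    ∀ μ i j (u v : A), Word S i u → Word S j v → i + j = m + 1 → min i j ≤ μ →
      u * v ∈ rhs o S m := by
  intro μ
  induction μ with
  | zero =>
    intro i j u v hu hv _ hmin
    have := hu.one_le'; have := hv.one_le'; omega
  | succ μ ih =>
    intro i j u v hu hv hsum hmin
    have hi1 := hu.one_le'
    have hj1 := hv.one_le'
    by_cases hj : j = 1
    · subst hj
      exact mulS_mem_rhs (mem_lin_of_word hu (by omega)) hv.mem_of_one
    by_cases hi : i = 1
    · subst hi
      exact sMul_mem_rhs (mem_lin_of_word hv (by omega)) hu.mem_of_one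
    rcases le_or_gt j i with hji | hij
    · -- split the right factor
      cases hv with
      | of h => exact absurd rfl hj
      | @mul jx jy x y hx hy =>
        have hx1 := hx.one_le'
        have hy1 := hy.one_le'
        have h1 : x*(u*y) ∈ rhs o S m :=
          ih jx (i+jy) x (u*y) hx (hu.mul hy) (by omega) (by omega)
        have h2 : x*(y*u) ∈ rhs o S m :=
          ih jx (jy+i) x (y*u) hx (hy.mul hu) (by omega) (by omega)
        have h3 : y*(x*u) ∈ rhs o S m :=
          ih jy (jx+i) y (x*u) hy (hx.mul hu) (by omega) (by omega)
        have h4 : y*(u*x) ∈ rhs o S m :=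
          ih jy (i+jx) y (u*x) hy (hu.mul hx) (by omega) (by omega)
        have h5 : (x*u)*y ∈ rhs o S m :=
          ih (jx+i) jy (x*u) y (hx.mul hu) hy (by omega) (by omega)
        have h6 : (u*x)*y ∈ rhs o S m :=
          ih (i+jx) jy (u*x) y (hu.mul hx) hy (by omega) (by omega)
        have h7 : (y*u)*x ∈ rhs o S m :=
          ih (jy+i) jx (y*u) x (hy.mul hu) hx (by omega) (by omega)
        have h8 : (u*y)*x ∈ rhs o S m :=
          ih (i+jy) jx (u*y) x (hu.mul hy) hx (by omega) (by omega)
        have hxy : x*y ∈ rhs o S m := word_mem_rhs (hx.mul hy) (by omega)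
        have hyx : y*x ∈ rhs o S m := word_mem_rhs (hy.mul hx) (by omega)
        have hxu : x*u ∈ rhs o S m := word_mem_rhs (hx.mul hu) (by omega)
        have hux : u*x ∈ rhs o S m := word_mem_rhs (hu.mul hx) (by omega)
        have hyu : y*u ∈ rhs o S m := word_mem_rhs (hy.mul hu) (by omega)
        have huy : u*y ∈ rhs o S m := word_mem_rhs (hu.mul hy) (by omega)
        have hxm : x ∈ rhs o S m := word_mem_rhs hx (by omega)
        have hym : y ∈ rhs o S m := word_mem_rhs hy (by omega)
        have hum : u ∈ rhs o S m := word_mem_rhs hu (by omega)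
        have hP : o ⊔ Submodule.span F (Pset x y u) ≤ rhs o S m := by
          refine sup_le (le_trans le_sup_left lin_le_rhs) (Submodule.span_le.mpr ?_)
          intro p hp
          simp only [Pset, Ql, Qr, Set.mem_union, Set.mem_insert_iff,
            Set.mem_singleton_iff] at hp
          rcases hp with (rfl|rfl|rfl|rfl|rfl|rfl|rfl|rfl|rfl|rfl|rfl|rfl|rfl) |
            (rfl|rfl|rfl|rfl|rfl|rfl|rfl|rfl|rfl|rfl|rfl|rfl|rfl) <;>
            first
              | exact h1 | exact h2 | exact h3 | exact h4 | exact h5 | exact h6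
              | exact h7 | exact h8 | exact hxy | exact hyx | exact hxu | exact hux
              | exact hyu | exact huy | exact hxm | exact hym | exact hum
        exact hP (hmix x y u).2
    · -- split the left factor
      cases hu with
      | of h => exact absurd rfl hi
      | @mul ix iy x y hx hy =>
        have hx1 := hx.one_le'
        have hy1 := hy.one_le'
        have h1 : x*(v*y) ∈ rhs o S m :=
          ih ix (j+iy) x (v*y) hx (hv.mul hy) (by omega) (by omega)
        have h2 : x*(y*v) ∈ rhs o S m :=
          ih ix (iy+j) x (y*v) hx (hy.mul hv) (by omega) (by omega)
        have h3 : y*(x*v) ∈ rhs o S m :=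
          ih iy (ix+j) y (x*v) hy (hx.mul hv) (by omega) (by omega)
        have h4 : y*(v*x) ∈ rhs o S m :=
          ih iy (j+ix) y (v*x) hy (hv.mul hx) (by omega) (by omega)
        have h5 : (x*v)*y ∈ rhs o S m :=
          ih (ix+j) iy (x*v) y (hx.mul hv) hy (by omega) (by omega)
        have h6 : (v*x)*y ∈ rhs o S m :=
          ih (j+ix) iy (v*x) y (hv.mul hx) hy (by omega) (by omega)
        have h7 : (y*v)*x ∈ rhs o S m :=
          ih (iy+j) ix (y*v) x (hy.mul hv) hx (by omega) (by omega)
        have h8 : (v*y)*x ∈ rhs o S m :=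
          ih (j+iy) ix (v*y) x (hv.mul hy) hx (by omega) (by omega)
        have hxy : x*y ∈ rhs o S m := word_mem_rhs (hx.mul hy) (by omega)
        have hyx : y*x ∈ rhs o S m := word_mem_rhs (hy.mul hx) (by omega)
        have hxv : x*v ∈ rhs o S m := word_mem_rhs (hx.mul hv) (by omega)
        have hvx : v*x ∈ rhs o S m := word_mem_rhs (hv.mul hx) (by omega)
        have hyv : y*v ∈ rhs o S m := word_mem_rhs (hy.mul hv) (by omega)
        have hvy : v*y ∈ rhs o S m := word_mem_rhs (hv.mul hy) (by omega)
        have hxm : x ∈ rhs o S m := word_mem_rhs hx (by omega)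
        have hym : y ∈ rhs o S m := word_mem_rhs hy (by omega)
        have hvm : v ∈ rhs o S m := word_mem_rhs hv (by omega)
        have hP : o ⊔ Submodule.span F (Pset x y v) ≤ rhs o S m := by
          refine sup_le (le_trans le_sup_left lin_le_rhs) (Submodule.span_le.mpr ?_)
          intro p hp
          simp only [Pset, Ql, Qr, Set.mem_union, Set.mem_insert_iff,
            Set.mem_singleton_iff] at hp
          rcases hp with (rfl|rfl|rfl|rfl|rfl|rfl|rfl|rfl|rfl|rfl|rfl|rfl|rfl) |
            (rfl|rfl|rfl|rfl|rfl|rfl|rfl|rfl|rfl|rfl|rfl|rfl|rfl) <;>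
            first
              | exact h1 | exact h2 | exact h3 | exact h4 | exact h5 | exact h6
              | exact h7 | exact h8 | exact hxy | exact hyx | exact hxv | exact hvx
              | exact hyv | exact hvy | exact hxm | exact hym | exact hvm
        exact hP (hmix x y v).1

private lemma mul_right_mem_lin_succ {o : Submodule F A} (ho : IsUnitalSpan F o)
    {S : Set A} {k : ℕ} {a s : A} (ha : a ∈ lin F o S k) (hs : s ∈ S) :
    a * s ∈ lin F o S (k + 1) := by
  have hle : lin F o S k ≤ (lin F o S (k+1)).comap (LinearMap.mulRight F s) := by
    refine sup_le ?_ (Submodule.span_le.mpr ?_)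
    · rcases ho with ⟨-, rfl⟩ | ⟨e, he, rfl⟩
      · exact bot_le
      · rw [Submodule.span_le, Set.singleton_subset_iff]
        have : (LinearMap.mulRight F s) e = s := (he s).1
        simpa [this] using mem_lin_of_word (Word.of hs) (by omega)
    · intro b hb
      obtain ⟨n, hn, hb⟩ := Set.mem_iUnion₂.mp hb
      simp only [Finset.mem_coe, Finset.mem_Icc] at hn
      exact mem_lin_of_word (Word.mul hb (Word.of hs)) (by omega)
  exact hle ha

private lemma mul_left_mem_lin_succ {o : Submodule F A} (ho : IsUnitalSpan F o)
    {S : Set A} {k : ℕ} {a s : A} (ha : a ∈ lin F o S k) (hs : s ∈ S) :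
    s * a ∈ lin F o S (k + 1) := by
  have hle : lin F o S k ≤ (lin F o S (k+1)).comap (LinearMap.mulLeft F s) := by
    refine sup_le ?_ (Submodule.span_le.mpr ?_)
    · rcases ho with ⟨-, rfl⟩ | ⟨e, he, rfl⟩
      · exact bot_le
      · rw [Submodule.span_le, Set.singleton_subset_iff]
        have : (LinearMap.mulLeft F s) e = s := (he s).2
        simpa [this] using mem_lin_of_word (Word.of hs) (by omega)
    · intro b hb
      obtain ⟨n, hn, hb⟩ := Set.mem_iUnion₂.mp hb
      simp only [Finset.mem_coe, Finset.mem_Icc] at hn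
      exact mem_lin_of_word (Word.mul (Word.of hs) hb) (by omega)
  exact hle ha

private lemma lin_le_lin_succ {o : Submodule F A} {S : Set A} {k : ℕ} :
    lin F o S k ≤ lin F o S (k + 1) := by
  refine sup_le le_sup_left (Submodule.span_le.mpr ?_)
  intro b hb
  obtain ⟨n, hn, hb⟩ := Set.mem_iUnion₂.mp hb
  simp only [Finset.mem_coe, Finset.mem_Icc] at hn
  exact mem_lin_of_word hb (by omega)

end Aux

/-- If `A` is mixing and `m ≥ 1`, then
`Lin_{m+1}(S) = Lin_m(S)·S + S·Lin_m(S) + Lin_m(S)`. -/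
theorem lin_succ_of_isMixing {F A : Type*} [Field F] [NonUnitalNonAssocRing A]
    [Module F A] [SMulCommClass F A A] [IsScalarTower F A A] [FiniteDimensional F A]
    (o : Submodule F A) (ho : IsUnitalSpan F o) (hmix : IsMixing F o)
    (S : Set A) (m : ℕ) (hm : 1 ≤ m) :
    lin F o S (m + 1) =
      Submodule.span F ((lin F o S m : Set A) * S) ⊔
        Submodule.span F (S * (lin F o S m : Set A)) ⊔ lin F o S m := by
  apply le_antisymm
  · -- hard direction
    refine sup_le (le_trans le_sup_left (lin_le_rhs (o := o))) (Submodule.span_le.mpr ?_)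
    intro a ha
    obtain ⟨n, hn, ha⟩ := Set.mem_iUnion₂.mp ha
    simp only [Finset.mem_coe, Finset.mem_Icc] at hn
    rcases lt_or_eq_of_le hn.2 with h | h
    · exact word_mem_rhs ha (by omega)
    · subst h
      obtain ⟨i, j, u, v, hu, hv, hij, rfl⟩ := ha.exists_mul (by omega)
      exact key_mixing hmix hm (min i j) i j u v hu hv hij le_rfl
  · -- easy direction
    refine sup_le (sup_le (Submodule.span_le.mpr ?_) (Submodule.span_le.mpr ?_))
      lin_le_lin_succ
    · rintro a ⟨x, hx, s, hs, rfl⟩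
      exact mul_right_mem_lin_succ ho hx hs
    · rintro a ⟨s, hs, x, hx, rfl⟩
      exact mul_left_mem_lin_succ ho hx hs

end DescLength
end

section
/- Let A be an algebra over a field F (possibly non-unital and non-associative). Assume that for all a, b ∈ A both (ab)a and a(ba) can be represented in the form f_1(a,b)a + f_2(a,b)b + g(b)aa + f_3(a,b)ab + f_4(a,b)ba + f_5(a,b)e, for some functions f_j : A × A → F (j = 1,…,5, possibly different for (ab)a and for a(ba)) and g : A → F, where the coefficient g(b) at aa depends only on b, and where f_5(a,b) = 0 for all a, b if A is non-unital. Then A is descendingly flexible. -/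
open Pointwise

namespace DescLength

variable (F : Type*) [Field F] {A : Type*} [NonUnitalNonAssocRing A] [Module F A]

set_option maxHeartbeats 1600000

/-- If for all `a, b ∈ A` both `(ab)a` and `a(ba)` can be written as
`f₁(a,b)a + f₂(a,b)b + g(b)aa + f₃(a,b)(ab) + f₄(a,b)(ba) + f₅(a,b)e`, where the coefficient
`g(b)` at `aa` depends only on `b` (and the constant term `f₅(a,b)e` is an element of
`o = Lin_0`, so it vanishes when `A` is non-unital), then `A` is descendingly flexible. -/
theorem isDescFlexible_of_rep {F A : Type*} [Field F] [NonUnitalNonAssocRing A]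
    [Module F A] [SMulCommClass F A A] [IsScalarTower F A A]
    (o : Submodule F A) (ho : IsUnitalSpan F o)
    (hrep : ∃ g : A → F,
      (∃ (f₁ f₂ f₃ f₄ : A → A → F) (u : A → A → A), (∀ a b : A, u a b ∈ o) ∧
        ∀ a b : A, (a * b) * a =
          f₁ a b • a + f₂ a b • b + g b • (a * a) + f₃ a b • (a * b) + f₄ a b • (b * a) + u a b) ∧
      (∃ (f₁ f₂ f₃ f₄ : A → A → F) (u : A → A → A), (∀ a b : A, u a b ∈ o) ∧
        ∀ a b : A, a * (b * a) =
          f₁ a b • a + f₂ a b • b + g b • (a * a) + f₃ a b • (a * b) + f₄ a b • (b * a) + u a b)) :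
    IsDescFlexible F o := by
  obtain ⟨g, ⟨f₁, f₂, f₃, f₄, u, hu, h⟩, ⟨f₁', f₂', f₃', f₄', u', hu', h'⟩⟩ := hrep
  intro a b c
  refine ⟨?_, ?_, ?_, ?_⟩
  · rw [h a b]
    unfold lin1five
    repeat first
      | exact Submodule.mem_sup_left (hu _ _)
      | refine Submodule.add_mem _ ?_ ?_
      | refine Submodule.smul_mem _ _ ?_
      | exact Submodule.mem_sup_right (Submodule.subset_span (by simp))
  · rw [h' a b]
    unfold lin1five
    repeat first
      | exact Submodule.mem_sup_left (hu' _ _)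
      | refine Submodule.add_mem _ ?_ ?_
      | refine Submodule.smul_mem _ _ ?_
      | exact Submodule.mem_sup_right (Submodule.subset_span (by simp))
  · have hk : (a * b) * c + (c * b) * a =
        ((a + c) * b) * (a + c) - (a * b) * a - (c * b) * c := by
      simp only [mul_add, add_mul]
      abel
    have expand : (a * b) * c + (c * b) * a =
        f₁ (a + c) b • a + f₁ (a + c) b • c + f₂ (a + c) b • b
          + g b • (a * c) + g b • (c * a)
          + f₃ (a + c) b • (a * b) + f₃ (a + c) b • (c * b)
          + f₄ (a + c) b • (b * a) + f₄ (a + c) b • (b * c)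
          + u (a + c) b
          - (f₁ a b • a + f₂ a b • b + f₃ a b • (a * b) + f₄ a b • (b * a) + u a b)
          - (f₁ c b • c + f₂ c b • b + f₃ c b • (c * b) + f₄ c b • (b * c) + u c b) := by
      rw [hk, h (a + c) b, h a b, h c b]
      simp only [mul_add, add_mul, smul_add]
      module
    rw [expand]
    unfold lin2'
    repeat first
      | exact Submodule.mem_sup_left (hu _ _)
      | refine Submodule.add_mem _ ?_ ?_
      | refine Submodule.sub_mem _ ?_ ?_
      | refine Submodule.smul_mem _ _ ?_
      | exact Submodule.mem_sup_right (Submodule.subset_span (by simp))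
  · have hk : a * (b * c) + c * (b * a) =
        (a + c) * (b * (a + c)) - a * (b * a) - c * (b * c) := by
      simp only [mul_add, add_mul]
      abel
    have expand : a * (b * c) + c * (b * a) =
        f₁' (a + c) b • a + f₁' (a + c) b • c + f₂' (a + c) b • b
          + g b • (a * c) + g b • (c * a)
          + f₃' (a + c) b • (a * b) + f₃' (a + c) b • (c * b)
          + f₄' (a + c) b • (b * a) + f₄' (a + c) b • (b * c)
          + u' (a + c) b
          - (f₁' a b • a + f₂' a b • b + f₃' a b • (a * b) + f₄' a b • (b * a) + u' a b)
          - (f₁' c b • c + f₂' c b • b + f₃' c b • (c * b) + f₄' c b • (b * c) + u' c b) := by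
      rw [hk, h' (a + c) b, h' a b, h' c b]
      simp only [mul_add, add_mul, smul_add]
      module
    rw [expand]
    unfold lin2'
    repeat first
      | exact Submodule.mem_sup_left (hu' _ _)
      | refine Submodule.add_mem _ ?_ ?_
      | refine Submodule.sub_mem _ ?_ ?_
      | refine Submodule.smul_mem _ _ ?_
      | exact Submodule.mem_sup_right (Submodule.subset_span (by simp))


end DescLength
end

section
/- Let A be an algebra over a field F (possibly non-unital and non-associative). Assume that for all a, b ∈ A both (ba)a and a(ab) can be represented in the form f_1(a,b)a + f_2(a,b)b + g(b)aa + f_3(a,b)ab + f_4(a,b)ba + f_5(a,b)e, for some functions f_j : A × A → F (j = 1,…,5, possibly different for (ba)a and for a(ab)) and g : A → F, where the coefficient g(b) at aa depends only on b, and where f_5(a,b) = 0 for all a, b if A is non-unital. Then A is descendingly alternative. -/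
open Pointwise

namespace DescLength

variable (F : Type*) [Field F] {A : Type*} [NonUnitalNonAssocRing A] [Module F A]

set_option maxHeartbeats 1600000 in
/-- If for all `a, b ∈ A` both `(ba)a` and `a(ab)` can be written as
`f₁(a,b)a + f₂(a,b)b + g(b)aa + f₃(a,b)(ab) + f₄(a,b)(ba) + f₅(a,b)e`, where the coefficient
`g(b)` at `aa` depends only on `b` (and the constant term `f₅(a,b)e` is an element of
`o = Lin_0`, so it vanishes when `A` is non-unital), then `A` is descendingly alternative. -/
theorem isDescAlternative_of_rep {F A : Type*} [Field F] [NonUnitalNonAssocRing A]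
    [Module F A] [SMulCommClass F A A] [IsScalarTower F A A]
    (o : Submodule F A) (ho : IsUnitalSpan F o)
    (hrep : ∃ g : A → F,
      (∃ (f₁ f₂ f₃ f₄ : A → A → F) (u : A → A → A), (∀ a b : A, u a b ∈ o) ∧
        ∀ a b : A, (b * a) * a =
          f₁ a b • a + f₂ a b • b + g b • (a * a) + f₃ a b • (a * b) + f₄ a b • (b * a) + u a b) ∧
      (∃ (f₁ f₂ f₃ f₄ : A → A → F) (u : A → A → A), (∀ a b : A, u a b ∈ o) ∧
        ∀ a b : A, a * (a * b) =
          f₁ a b • a + f₂ a b • b + g b • (a * a) + f₃ a b • (a * b) + f₄ a b • (b * a) + u a b)) :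
    IsDescAlternative F o := by
  obtain ⟨g, ⟨f₁, f₂, f₃, f₄, u, hu, hl⟩, ⟨p₁, p₂, p₃, p₄, v, hv, hr⟩⟩ := hrep
  intro a b c
  refine ⟨?_, ?_, ?_, ?_⟩
  · rw [hl a b]
    unfold lin1five
    have hs : ∀ x ∈ ({a, b, a*a, a*b, b*a} : Set A),
        x ∈ o ⊔ Submodule.span F ({a, b, a*a, a*b, b*a} : Set A) :=
      fun x hx => Submodule.mem_sup_right (Submodule.subset_span hx)
    exact add_mem (add_mem (add_mem (add_mem (add_mem
      (Submodule.smul_mem _ _ (hs a (by simp))) (Submodule.smul_mem _ _ (hs b (by simp))))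
      (Submodule.smul_mem _ _ (hs (a*a) (by simp)))) (Submodule.smul_mem _ _ (hs (a*b) (by simp))))
      (Submodule.smul_mem _ _ (hs (b*a) (by simp)))) (Submodule.mem_sup_left (hu a b))
  · rw [hr a b]
    unfold lin1five
    have hs : ∀ x ∈ ({a, b, a*a, a*b, b*a} : Set A),
        x ∈ o ⊔ Submodule.span F ({a, b, a*a, a*b, b*a} : Set A) :=
      fun x hx => Submodule.mem_sup_right (Submodule.subset_span hx)
    exact add_mem (add_mem (add_mem (add_mem (add_mem
      (Submodule.smul_mem _ _ (hs a (by simp))) (Submodule.smul_mem _ _ (hs b (by simp))))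
      (Submodule.smul_mem _ _ (hs (a*a) (by simp)))) (Submodule.smul_mem _ _ (hs (a*b) (by simp))))
      (Submodule.smul_mem _ _ (hs (b*a) (by simp)))) (Submodule.mem_sup_left (hv a b))
  · have e1 := hl (b + c) a
    have e2 := hl b a
    have e3 := hl c a
    have key2 : (a*b)*c + (a*c)*b =
        (f₁ (b+c) a - f₁ b a) • b + (f₁ (b+c) a - f₁ c a) • c
        + (f₂ (b+c) a - f₂ b a - f₂ c a) • a
        + g a • (b*c) + g a • (c*b)
        + (f₃ (b+c) a - f₃ b a) • (b*a) + (f₃ (b+c) a - f₃ c a) • (c*a)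
        + (f₄ (b+c) a - f₄ b a) • (a*b) + (f₄ (b+c) a - f₄ c a) • (a*c)
        + (u (b+c) a - u b a - u c a) := by
      rw [show (a*b)*c + (a*c)*b = (a*(b+c))*(b+c) - (a*b)*b - (a*c)*c from by
        simp only [mul_add, add_mul]; abel, e1, e2, e3]
      simp only [mul_add, add_mul]
      module
    rw [key2]
    unfold lin2'
    have hs : ∀ x ∈ ({a, b, c, a*b, b*a, b*c, c*b, a*c, c*a} : Set A),
        x ∈ o ⊔ Submodule.span F ({a, b, c, a*b, b*a, b*c, c*b, a*c, c*a} : Set A) :=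
      fun x hx => Submodule.mem_sup_right (Submodule.subset_span hx)
    exact add_mem (add_mem (add_mem (add_mem (add_mem (add_mem (add_mem (add_mem (add_mem
      (Submodule.smul_mem _ _ (hs b (by simp))) (Submodule.smul_mem _ _ (hs c (by simp))))
      (Submodule.smul_mem _ _ (hs a (by simp))))
      (Submodule.smul_mem _ _ (hs (b*c) (by simp))))
      (Submodule.smul_mem _ _ (hs (c*b) (by simp))))
      (Submodule.smul_mem _ _ (hs (b*a) (by simp))))
      (Submodule.smul_mem _ _ (hs (c*a) (by simp))))
      (Submodule.smul_mem _ _ (hs (a*b) (by simp))))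
      (Submodule.smul_mem _ _ (hs (a*c) (by simp))))
      (Submodule.mem_sup_left (sub_mem (sub_mem (hu _ _) (hu _ _)) (hu _ _)))
  · have e1 := hr (a + b) c
    have e2 := hr a c
    have e3 := hr b c
    have key2 : a*(b*c) + b*(a*c) =
        (p₁ (a+b) c - p₁ a c) • a + (p₁ (a+b) c - p₁ b c) • b
        + (p₂ (a+b) c - p₂ a c - p₂ b c) • c
        + g c • (a*b) + g c • (b*a)
        + (p₃ (a+b) c - p₃ a c) • (a*c) + (p₃ (a+b) c - p₃ b c) • (b*c)
        + (p₄ (a+b) c - p₄ a c) • (c*a) + (p₄ (a+b) c - p₄ b c) • (c*b)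
        + (v (a+b) c - v a c - v b c) := by
      rw [show a*(b*c) + b*(a*c) = (a+b)*((a+b)*c) - a*(a*c) - b*(b*c) from by
        simp only [mul_add, add_mul]; abel, e1, e2, e3]
      simp only [mul_add, add_mul]
      module
    rw [key2]
    unfold lin2'
    have hs : ∀ x ∈ ({a, b, c, a*b, b*a, b*c, c*b, a*c, c*a} : Set A),
        x ∈ o ⊔ Submodule.span F ({a, b, c, a*b, b*a, b*c, c*b, a*c, c*a} : Set A) :=
      fun x hx => Submodule.mem_sup_right (Submodule.subset_span hx)
    exact add_mem (add_mem (add_mem (add_mem (add_mem (add_mem (add_mem (add_mem (add_mem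
      (Submodule.smul_mem _ _ (hs a (by simp))) (Submodule.smul_mem _ _ (hs b (by simp))))
      (Submodule.smul_mem _ _ (hs c (by simp))))
      (Submodule.smul_mem _ _ (hs (a*b) (by simp))))
      (Submodule.smul_mem _ _ (hs (b*a) (by simp))))
      (Submodule.smul_mem _ _ (hs (a*c) (by simp))))
      (Submodule.smul_mem _ _ (hs (b*c) (by simp))))
      (Submodule.smul_mem _ _ (hs (c*a) (by simp))))
      (Submodule.smul_mem _ _ (hs (c*b) (by simp))))
      (Submodule.mem_sup_left (sub_mem (sub_mem (hv _ _) (hv _ _)) (hv _ _)))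

end DescLength
end

section
/- Let A be a descendingly flexible algebra over a field F, S ⊆ A, and let a, b, c be words in letters from S of lengths p ≥ 1, q ≥ 1 and r ≥ 1 respectively; set n = p + q + r. Then (ab)c + (cb)a ∈ Lin_{n−1}(S) and a(bc) + c(ba) ∈ Lin_{n−1}(S). -/
open Pointwise

namespace DescLength

variable (F : Type*) [Field F] {A : Type*} [NonUnitalNonAssocRing A] [Module F A]

lemma mem_lin_of_word' {F A : Type*} [Field F] [NonUnitalNonAssocRing A] [Module F A]
    (o : Submodule F A) {S : Set A} {i k : ℕ} (h1 : 1 ≤ i) (hik : i ≤ k)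
    {x : A} (hx : Word S i x) : x ∈ lin F o S k := by
  apply Submodule.mem_sup_right
  apply Submodule.subset_span
  simp only [Set.mem_iUnion]
  exact ⟨i, by simp [Finset.mem_Icc, h1, hik], hx⟩

/-- In a descendingly flexible algebra, if `a, b, c` are words in letters
from `S` of lengths `p, q, r ≥ 1` and `n = p + q + r`, then
`(ab)c + (cb)a ∈ Lin_{n-1}(S)` and `a(bc) + c(ba) ∈ Lin_{n-1}(S)`. -/
theorem word_flexible_mem_lin {F A : Type*} [Field F] [NonUnitalNonAssocRing A]
    [Module F A] [SMulCommClass F A A] [IsScalarTower F A A] [FiniteDimensional F A]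
    (o : Submodule F A) (ho : IsUnitalSpan F o) (hflex : IsDescFlexible F o)
    (S : Set A) (p q r : ℕ) (hp : 1 ≤ p) (hq : 1 ≤ q) (hr : 1 ≤ r)
    (a b c : A) (ha : a ∈ words S p) (hb : b ∈ words S q) (hc : c ∈ words S r) :
    (a * b) * c + (c * b) * a ∈ lin F o S (p + q + r - 1) ∧
    a * (b * c) + c * (b * a) ∈ lin F o S (p + q + r - 1) := by
  have key : lin2' F o a b c ≤ lin F o S (p + q + r - 1) := by
    apply sup_le
    · exact le_sup_left
    · rw [Submodule.span_le]
      intro x hx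
      simp only [lin2', Set.mem_insert_iff, Set.mem_singleton_iff] at hx
      rcases hx with h|h|h|h|h|h|h|h|h <;> subst h
      · exact mem_lin_of_word' o hp (by omega) ha
      · exact mem_lin_of_word' o hq (by omega) hb
      · exact mem_lin_of_word' o hr (by omega) hc
      · exact mem_lin_of_word' o (by omega) (by omega) (Word.mul ha hb)
      · exact mem_lin_of_word' o (by omega) (by omega) (Word.mul hb ha)
      · exact mem_lin_of_word' o (by omega) (by omega) (Word.mul hb hc)
      · exact mem_lin_of_word' o (by omega) (by omega) (Word.mul hc hb)
      · exact mem_lin_of_word' o (by omega) (by omega) (Word.mul ha hc)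
      · exact mem_lin_of_word' o (by omega) (by omega) (Word.mul hc ha)
  obtain ⟨-, -, h3, h4⟩ := hflex a b c
  exact ⟨key h3, key h4⟩

end DescLength
end

section
/- Let A be a descendingly alternative algebra over a field F, S ⊆ A, and let a, b, c be words in letters from S of lengths p ≥ 1, q ≥ 1 and r ≥ 1 respectively; set n = p + q + r. Then (ab)c + (ac)b ∈ Lin_{n−1}(S) and a(bc) + b(ac) ∈ Lin_{n−1}(S). -/
open Pointwise

namespace DescLength

variable (F : Type*) [Field F] {A : Type*} [NonUnitalNonAssocRing A] [Module F A]

/-- In a descendingly alternative algebra, if `a, b, c` are words in letters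
from `S` of lengths `p, q, r ≥ 1` and `n = p + q + r`, then
`(ab)c + (ac)b ∈ Lin_{n-1}(S)` and `a(bc) + b(ac) ∈ Lin_{n-1}(S)`. -/
theorem word_alternative_mem_lin {F A : Type*} [Field F] [NonUnitalNonAssocRing A]
    [Module F A] [SMulCommClass F A A] [IsScalarTower F A A] [FiniteDimensional F A]
    (o : Submodule F A) (ho : IsUnitalSpan F o) (halt : IsDescAlternative F o)
    (S : Set A) (p q r : ℕ) (hp : 1 ≤ p) (hq : 1 ≤ q) (hr : 1 ≤ r)
    (a b c : A) (ha : a ∈ words S p) (hb : b ∈ words S q) (hc : c ∈ words S r) :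
    (a * b) * c + (a * c) * b ∈ lin F o S (p + q + r - 1) ∧
    a * (b * c) + b * (a * c) ∈ lin F o S (p + q + r - 1) := by
  have key : ∀ (m : ℕ) (x : A), Word S m x → 1 ≤ m → m ≤ p + q + r - 1 →
      x ∈ lin F o S (p + q + r - 1) := by
    intro m x hx h1 h2
    apply Submodule.mem_sup_right
    apply Submodule.subset_span
    exact Set.mem_biUnion (Finset.mem_Icc.mpr ⟨h1, h2⟩) hx
  have hle : lin2' F o a b c ≤ lin F o S (p + q + r - 1) := by
    apply sup_le (le_sup_left)
    rw [Submodule.span_le]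
    intro x hx
    simp only [Set.mem_insert_iff, Set.mem_singleton_iff] at hx
    rcases hx with rfl | rfl | rfl | rfl | rfl | rfl | rfl | rfl | rfl
    · exact key p _ ha hp (by omega)
    · exact key q _ hb hq (by omega)
    · exact key r _ hc hr (by omega)
    · exact key (p + q) _ (Word.mul ha hb) (by omega) (by omega)
    · exact key (q + p) _ (Word.mul hb ha) (by omega) (by omega)
    · exact key (q + r) _ (Word.mul hb hc) (by omega) (by omega)
    · exact key (r + q) _ (Word.mul hc hb) (by omega) (by omega)
    · exact key (p + r) _ (Word.mul ha hc) (by omega) (by omega)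
    · exact key (r + p) _ (Word.mul hc ha) (by omega) (by omega)
  obtain ⟨-, -, h3, h4⟩ := halt a b c
  exact ⟨hle h3, hle h4⟩

end DescLength
end
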